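/- arXiv:2205.00402 — 2 statements merged into one kernel-verified Lean document; each statement's English description precedes it below -/
import Mathlib

section
/- Let F be the free product of nontrivial groups A_i (i ∈ I), let N be a normal subgroup of F that admits elementary endomorphisms and such that F/N is orderable, and fix a bi-invariant linear order on F/N. Let P ⊂ I and let H be the subgroup of F generated by the A_i with i ∈ P. Let δ_1, …, δ_l and μ_1, …, μ_k be elements of F such that δ_iN < δ_jN and μ_iN < μ_jN whenever i < j. If for some j ∈ {1, …, k} the coset μ_1⁻¹μ_jN contains no element of H, then there exist indices i_0 ∈ {1, …, l} and j_0 ∈ {1, …, k} such that the coset δ_{i_0}μ_{j_0}N contains no element of H and δ_{i_0}μ_{j_0}N ≠ δ_iμ_jN whenever (i, j) ≠ (i_0, j_0). -/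
open Monoid

noncomputable section

/-- An endomorphism of a free product is elementary if it kills the factors indexed by some
set `K` and fixes all the other factors elementwise. -/
def IsElementaryEndo {ι : Type*} {A : ι → Type*} [∀ i, Group (A i)]
    (φ : CoprodI A →* CoprodI A) : Prop :=
  ∃ K : Set ι, ∀ (i : ι) (a : A i),
    (i ∈ K → φ (CoprodI.of a) = 1) ∧ (i ∉ K → φ (CoprodI.of a) = CoprodI.of a)

/-- A subgroup of a free product admits elementary endomorphisms if it is invariant under
every elementary endomorphism. -/
def AdmitsElemEndos {ι : Type*} {A : ι → Type*} [∀ i, Group (A i)]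
    (N : Subgroup (CoprodI A)) : Prop :=
  ∀ φ : CoprodI A →* CoprodI A, IsElementaryEndo φ → ∀ x ∈ N, φ x ∈ N

section GridLemma

variable {G : Type*} [Group G]

private lemma bi_lt_left (lo : LinearOrder G)
    (hbi : ∀ a b c : G, lo.le a b → lo.le (c * a) (c * b) ∧ lo.le (a * c) (b * c))
    (c : G) {a b : G} (h : lo.lt a b) : lo.lt (c * a) (c * b) := by
  letI := lo
  have h' : a < b := h
  exact lt_of_le_of_ne ((hbi a b c h'.le).1) (fun he => h'.ne (mul_left_cancel he))

private lemma bi_lt_right (lo : LinearOrder G)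
    (hbi : ∀ a b c : G, lo.le a b → lo.le (c * a) (c * b) ∧ lo.le (a * c) (b * c))
    (c : G) {a b : G} (h : lo.lt a b) : lo.lt (a * c) (b * c) := by
  letI := lo
  have h' : a < b := h
  exact lt_of_le_of_ne ((hbi a b c h'.le).2) (fun he => h'.ne (mul_right_cancel he))

private lemma bi_conj_pos (lo : LinearOrder G)
    (hbi : ∀ a b c : G, lo.le a b → lo.le (c * a) (c * b) ∧ lo.le (a * c) (b * c))
    (c : G) {a : G} (h : lo.lt 1 a) : lo.lt 1 (c * a * c⁻¹) := by
  letI := lo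
  have h1 : lo.lt (c * 1) (c * a) := bi_lt_left lo hbi c h
  rw [mul_one] at h1
  have h2 : lo.lt (c * c⁻¹) (c * a * c⁻¹) := bi_lt_right lo hbi c⁻¹ h1
  rwa [mul_inv_cancel] at h2

private lemma bi_inv_lt (lo : LinearOrder G)
    (hbi : ∀ a b c : G, lo.le a b → lo.le (c * a) (c * b) ∧ lo.le (a * c) (b * c))
    {a b : G} (h : lo.lt a b) : lo.lt b⁻¹ a⁻¹ := by
  letI := lo
  have h1 : lo.lt (a⁻¹ * a) (a⁻¹ * b) := bi_lt_left lo hbi a⁻¹ h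
  rw [inv_mul_cancel] at h1
  have h2 : lo.lt (1 * b⁻¹) (a⁻¹ * b * b⁻¹) := bi_lt_right lo hbi b⁻¹ h1
  rwa [one_mul, mul_inv_cancel_right] at h2

/-- Core of the grid lemma: if some cell `d i * m j` is "bad" with positive defect
`κ v = v * (r v)⁻¹ > 1`, then some bad cell has a value distinct from all other cells. -/
private lemma grid_core (lo : LinearOrder G)
    (hbi : ∀ a b c : G, lo.le a b → lo.le (c * a) (c * b) ∧ lo.le (a * c) (b * c))
    (r : G →* G) {l k : ℕ} (d : Fin l → G) (m : Fin k → G)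
    (hd : ∀ i j : Fin l, i < j → lo.lt (d i) (d j))
    (hm : ∀ i j : Fin k, i < j → lo.lt (m i) (m j))
    (hex : ∃ p : Fin l × Fin k,
      lo.lt 1 (d p.1 * m p.2 * (r (d p.1 * m p.2))⁻¹)) :
    ∃ p₀ : Fin l × Fin k, r (d p₀.1 * m p₀.2) ≠ d p₀.1 * m p₀.2 ∧
      ∀ p : Fin l × Fin k, p ≠ p₀ → d p₀.1 * m p₀.2 ≠ d p.1 * m p.2 := by
  classical
  letI := lo
  set κ : G → G := fun g => g * (r g)⁻¹ with hκdef
  set v : Fin l × Fin k → G := fun p => d p.1 * m p.2 with hvdef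
  -- the key algebraic identity
  have hkey : ∀ x y : G,
      κ (x * y⁻¹ * x)
        = κ x * ((r x * (r y)⁻¹) * ((κ y)⁻¹ * κ x) * (r x * (r y)⁻¹)⁻¹) := by
    intro x y
    simp only [hκdef, map_mul, map_inv]
    group
  obtain ⟨pex, hpex⟩ := hex
  set S : Finset (Fin l × Fin k) := Finset.univ.filter (fun p => lo.lt 1 (κ (v p)))
    with hSdef
  have hpexS : pex ∈ S := by
    rw [hSdef, Finset.mem_filter]
    exact ⟨Finset.mem_univ _, hpex⟩
  obtain ⟨p₀, hp₀S, hp₀max⟩ :=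
    S.exists_max_image (fun p => toLex (κ (v p), v p)) ⟨pex, hpexS⟩
  have hk₀ : lo.lt 1 (κ (v p₀)) := by
    rw [hSdef, Finset.mem_filter] at hp₀S
    exact hp₀S.2
  -- the core contradiction: no other cell can share the value of `p₀`
  have core : ∀ (a a' : Fin l) (b b' : Fin k), a < a' → b' < b →
      d a * m b = d a' * m b' → d a' * m b' = v p₀ → False := by
    intro a a' b b' haa hbb heq2 hx
    have hxy : lo.lt (v p₀) (v (a', b)) := by
      rw [← hx]
      exact bi_lt_left lo hbi (d a') (hm b' b hbb)
    have hzx : lo.lt (v (a, b')) (v p₀) := by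
      have h3 : d a * m b = v p₀ := heq2.trans hx
      rw [← h3]
      exact bi_lt_left lo hbi (d a) (hm b' b hbb)
    have hrel : v p₀ * (v (a', b))⁻¹ * v p₀ = v (a, b') := by
      have h3 : d a * m b = v p₀ := heq2.trans hx
      show v p₀ * (d a' * m b)⁻¹ * v p₀ = d a * m b'
      rw [← h3]
      nth_rewrite 2 [heq2]
      group
    -- bound the defect of the upper corner
    have hy_lt : lo.lt (κ (v (a', b))) (κ (v p₀)) := by
      rcases lt_trichotomy (κ (v (a', b))) (κ (v p₀)) with h | h | h
      · exact h
      · exfalso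
        have hyS : (a', b) ∈ S := by
          rw [hSdef, Finset.mem_filter]
          exact ⟨Finset.mem_univ _, h ▸ hk₀⟩
        have hle := hp₀max _ hyS
        rcases Prod.Lex.le_iff.mp hle with h' | ⟨_, h2⟩
        · exact absurd (show κ (v (a', b)) < κ (v p₀) from h') (h ▸ lt_irrefl _)
        · exact absurd (show v (a', b) ≤ v p₀ from h2) (not_le.mpr hxy)
      · exfalso
        have hyS : (a', b) ∈ S := by
          rw [hSdef, Finset.mem_filter]
          exact ⟨Finset.mem_univ _, hk₀.trans h⟩
        have hle := hp₀max _ hyS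
        rcases Prod.Lex.le_iff.mp hle with h' | ⟨h1, _⟩
        · exact absurd (show κ (v (a', b)) < κ (v p₀) from h') (not_lt.mpr h.le)
        · exact absurd (show κ (v (a', b)) = κ (v p₀) from h1) (ne_of_gt h)
    -- the lower corner then has strictly bigger defect than the maximum: contradiction
    have hzκ : lo.lt (κ (v p₀)) (κ (v (a, b'))) := by
      have hpos : lo.lt 1 ((κ (v (a', b)))⁻¹ * κ (v p₀)) := by
        have := bi_lt_left lo hbi (κ (v (a', b)))⁻¹ hy_lt
        rwa [inv_mul_cancel] at this
      have hconj := bi_conj_pos lo hbi (r (v p₀) * (r (v (a', b)))⁻¹) hpos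
      have hkz : κ (v (a, b'))
          = κ (v p₀) * ((r (v p₀) * (r (v (a', b)))⁻¹)
              * ((κ (v (a', b)))⁻¹ * κ (v p₀)) * (r (v p₀) * (r (v (a', b)))⁻¹)⁻¹) := by
        rw [← hrel]
        exact hkey (v p₀) (v (a', b))
      rw [hkz]
      have := bi_lt_left lo hbi (κ (v p₀)) hconj
      rwa [mul_one] at this
    have hzS : (a, b') ∈ S := by
      rw [hSdef, Finset.mem_filter]
      exact ⟨Finset.mem_univ _, hk₀.trans hzκ⟩
    have hle := hp₀max _ hzS
    rcases Prod.Lex.le_iff.mp hle with h' | ⟨h1, _⟩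
    · exact absurd (show κ (v (a, b')) < κ (v p₀) from h') (not_lt.mpr hzκ.le)
    · exact absurd (show κ (v (a, b')) = κ (v p₀) from h1) (ne_of_gt hzκ)
  refine ⟨p₀, ?_, ?_⟩
  · intro hre
    have : κ (v p₀) = 1 := by
      show v p₀ * (r (v p₀))⁻¹ = 1
      rw [show r (v p₀) = v p₀ from hre, mul_inv_cancel]
    exact absurd this (ne_of_gt hk₀)
  · intro p hne heq
    -- heq : v p₀ = v p
    have hne1 : p.1 ≠ p₀.1 := by
      intro h
      apply hne
      have hm' : m p₀.2 = m p.2 := by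
        apply mul_left_cancel (a := d p₀.1)
        calc d p₀.1 * m p₀.2 = v p₀ := rfl
          _ = v p := heq
          _ = d p.1 * m p.2 := rfl
          _ = d p₀.1 * m p.2 := by rw [h]
      have : p.2 = p₀.2 := by
        rcases lt_trichotomy p.2 p₀.2 with h2 | h2 | h2
        · exact absurd hm'.symm (ne_of_lt (hm _ _ h2))
        · exact h2
        · exact absurd hm' (ne_of_lt (hm _ _ h2))
      exact Prod.ext h this
    rcases lt_trichotomy p.1 p₀.1 with h1 | h1 | h1
    · -- p is the lower-left cell
      have hbb : p₀.2 < p.2 := by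
        rcases lt_trichotomy p₀.2 p.2 with h2 | h2 | h2
        · exact h2
        · exfalso
          have hd' : d p.1 = d p₀.1 := by
            apply mul_right_cancel (b := m p.2)
            calc d p.1 * m p.2 = v p := rfl
              _ = v p₀ := heq.symm
              _ = d p₀.1 * m p₀.2 := rfl
              _ = d p₀.1 * m p.2 := by rw [h2]
          exact absurd hd' (ne_of_lt (hd _ _ h1))
        · exfalso
          have : lo.lt (v p) (v p₀) := by
            show lo.lt (d p.1 * m p.2) (d p₀.1 * m p₀.2)
            exact lt_trans (bi_lt_right lo hbi (m p.2) (hd _ _ h1))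
              (bi_lt_left lo hbi (d p₀.1) (hm _ _ h2))
          exact absurd heq (ne_of_gt this)
      exact core p.1 p₀.1 p.2 p₀.2 h1 hbb heq.symm rfl
    · exact absurd h1 hne1
    · -- p is the upper-right cell
      have hbb : p.2 < p₀.2 := by
        rcases lt_trichotomy p.2 p₀.2 with h2 | h2 | h2
        · exact h2
        · exfalso
          have hd' : d p₀.1 = d p.1 := by
            apply mul_right_cancel (b := m p₀.2)
            calc d p₀.1 * m p₀.2 = v p₀ := rfl
              _ = v p := heq
              _ = d p.1 * m p.2 := rfl
              _ = d p.1 * m p₀.2 := by rw [h2]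
          exact absurd hd' (ne_of_lt (hd _ _ h1))
        · exfalso
          have : lo.lt (v p₀) (v p) := by
            show lo.lt (d p₀.1 * m p₀.2) (d p.1 * m p.2)
            exact lt_trans (bi_lt_right lo hbi (m p₀.2) (hd _ _ h1))
              (bi_lt_left lo hbi (d p.1) (hm _ _ h2))
          exact absurd heq (ne_of_lt this)
      exact core p₀.1 p.1 p₀.2 p.2 h1 hbb heq (heq.symm)

/-- The grid lemma: if some cell `d i * m j` is moved by the endomorphism `r`, then some
moved cell has a value distinct from the values of all other cells. -/
private lemma grid_lemma (lo : LinearOrder G)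
    (hbi : ∀ a b c : G, lo.le a b → lo.le (c * a) (c * b) ∧ lo.le (a * c) (b * c))
    (r : G →* G) {l k : ℕ} (d : Fin l → G) (m : Fin k → G)
    (hd : ∀ i j : Fin l, i < j → lo.lt (d i) (d j))
    (hm : ∀ i j : Fin k, i < j → lo.lt (m i) (m j))
    (hbad : ∃ p : Fin l × Fin k, r (d p.1 * m p.2) ≠ d p.1 * m p.2) :
    ∃ p₀ : Fin l × Fin k, r (d p₀.1 * m p₀.2) ≠ d p₀.1 * m p₀.2 ∧
      ∀ p : Fin l × Fin k, p ≠ p₀ → d p₀.1 * m p₀.2 ≠ d p.1 * m p.2 := by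
  classical
  letI := lo
  by_cases hpos : ∃ p : Fin l × Fin k,
      lo.lt 1 (d p.1 * m p.2 * (r (d p.1 * m p.2))⁻¹)
  · exact grid_core lo hbi r d m hd hm hpos
  · obtain ⟨p, hp⟩ := hbad
    set w : G := d p.1 * m p.2 with hwdef
    have hκne : w * (r w)⁻¹ ≠ 1 := fun h => hp ((mul_inv_eq_one.mp h).symm)
    have hκneg : lo.lt (w * (r w)⁻¹) 1 := by
      rcases lt_trichotomy (w * (r w)⁻¹) (1 : G) with h | h | h
      · exact h
      · exact absurd h hκne
      · exact absurd ⟨p, h⟩ hpos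
    have hd' : ∀ i j : Fin k, i < j → lo.lt ((m i.rev)⁻¹) ((m j.rev)⁻¹) :=
      fun i j hij => bi_inv_lt lo hbi (hm _ _ (Fin.rev_lt_rev.mpr hij))
    have hm' : ∀ i j : Fin l, i < j → lo.lt ((d i.rev)⁻¹) ((d j.rev)⁻¹) :=
      fun i j hij => bi_inv_lt lo hbi (hd _ _ (Fin.rev_lt_rev.mpr hij))
    have hex : ∃ q : Fin k × Fin l,
        lo.lt 1 ((m q.1.rev)⁻¹ * (d q.2.rev)⁻¹
          * (r ((m q.1.rev)⁻¹ * (d q.2.rev)⁻¹))⁻¹) := by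
      refine ⟨(p.2.rev, p.1.rev), ?_⟩
      have hmr : ((m ((p.2.rev).rev))⁻¹ * (d ((p.1.rev).rev))⁻¹ : G) = w⁻¹ := by
        rw [Fin.rev_rev, Fin.rev_rev, ← mul_inv_rev, ← hwdef]
      show lo.lt 1 ((m ((p.2.rev).rev))⁻¹ * (d ((p.1.rev).rev))⁻¹
          * (r ((m ((p.2.rev).rev))⁻¹ * (d ((p.1.rev).rev))⁻¹))⁻¹)
      rw [hmr]
      have hkey2 : w⁻¹ * (r w⁻¹)⁻¹ = w⁻¹ * (w * (r w)⁻¹)⁻¹ * (w⁻¹)⁻¹ := by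
        rw [map_inv]; group
      rw [hkey2]
      have hposinv : lo.lt 1 ((w * (r w)⁻¹)⁻¹) := by
        have := bi_inv_lt lo hbi hκneg
        rwa [inv_one] at this
      exact bi_conj_pos lo hbi w⁻¹ hposinv
    obtain ⟨q₀, hbad', huniq'⟩ := grid_core lo hbi r
      (fun i : Fin k => (m i.rev)⁻¹) (fun j : Fin l => (d j.rev)⁻¹) hd' hm' hex
    refine ⟨(q₀.2.rev, q₀.1.rev), ?_, ?_⟩
    · intro h
      apply hbad'
      show r ((m q₀.1.rev)⁻¹ * (d q₀.2.rev)⁻¹) = (m q₀.1.rev)⁻¹ * (d q₀.2.rev)⁻¹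
      rw [← mul_inv_rev, map_inv]
      exact congrArg Inv.inv h
    · intro q hqne heq
      refine huniq' (q.2.rev, q.1.rev) ?_ ?_
      · intro h
        apply hqne
        have h1 : q.2.rev = q₀.1 := congrArg Prod.fst h
        have h2 : q.1.rev = q₀.2 := congrArg Prod.snd h
        have h3 : q.1 = q₀.2.rev := by rw [← h2, Fin.rev_rev]
        have h4 : q.2 = q₀.1.rev := by rw [← h1, Fin.rev_rev]
        exact Prod.ext h3 h4
      · show (m q₀.1.rev)⁻¹ * (d q₀.2.rev)⁻¹
            = (m ((q.2.rev).rev))⁻¹ * (d ((q.1.rev).rev))⁻¹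
        rw [Fin.rev_rev, Fin.rev_rev, ← mul_inv_rev, ← mul_inv_rev]
        exact congrArg Inv.inv heq

end GridLemma

/-- **Lemma (on representatives).**  `F` the free product of nontrivial `A i`, `N` a normal
subgroup admitting elementary endomorphisms, `F/N` equipped with a bi-invariant linear
order `lo`, `P ⊂ I`, `H` generated by the `A i` with `i ∈ P`; `δ 0, …, δ (l-1)` and
`μ 0, …, μ (k-1)` elements of `F` whose cosets are strictly increasing.  If some coset
`(μ 0)⁻¹ (μ j) N` contains no element of `H`, then there are `i₀, j₀` such that
`δ i₀ μ j₀ N` contains no element of `H` and differs from all other `δ i μ j N`. -/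
theorem statement5 {ι : Type} (A : ι → Type) [∀ i, Group (A i)]
    [∀ i, Nontrivial (A i)]
    (N : Subgroup (CoprodI A)) [N.Normal] (hadm : AdmitsElemEndos N)
    (lo : LinearOrder (CoprodI A ⧸ N))
    (hbi : ∀ a b c : CoprodI A ⧸ N,
      lo.le a b → lo.le (c * a) (c * b) ∧ lo.le (a * c) (b * c))
    (P : Set ι) (hP : P ⊂ Set.univ)
    (H : Subgroup (CoprodI A))
    (hH : H = ⨆ i ∈ P, (CoprodI.of : A i →* CoprodI A).range)
    (l k : ℕ) (hl : 1 ≤ l) (hk : 1 ≤ k)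
    (δ : Fin l → CoprodI A) (μ : Fin k → CoprodI A)
    (hδ : ∀ i j : Fin l, i < j →
      lo.lt (QuotientGroup.mk (δ i) : CoprodI A ⧸ N) (QuotientGroup.mk (δ j)))
    (hμ : ∀ i j : Fin k, i < j →
      lo.lt (QuotientGroup.mk (μ i) : CoprodI A ⧸ N) (QuotientGroup.mk (μ j)))
    (hβ : ∃ j : Fin k, ¬ ∃ x ∈ H, ((μ ⟨0, hk⟩)⁻¹ * μ j)⁻¹ * x ∈ N) :
    ∃ (i₀ : Fin l) (j₀ : Fin k),
      (¬ ∃ x ∈ H, (δ i₀ * μ j₀)⁻¹ * x ∈ N) ∧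
      ∀ (i : Fin l) (j : Fin k), (i, j) ≠ (i₀, j₀) →
        (QuotientGroup.mk (δ i₀ * μ j₀) : CoprodI A ⧸ N)
          ≠ QuotientGroup.mk (δ i * μ j) := by
  classical
  -- the elementary endomorphism retracting onto the factors indexed by `P`
  set φ : CoprodI A →* CoprodI A :=
    Monoid.CoprodI.lift (fun i =>
      if i ∈ P then (Monoid.CoprodI.of : A i →* CoprodI A) else 1) with hφdef
  have hof_mem : ∀ {i : ι}, i ∈ P → ∀ (a : A i),
      φ (CoprodI.of a) = CoprodI.of a := by
    intro i hi a
    rw [hφdef, CoprodI.lift_of, if_pos hi]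
  have hof_not : ∀ {i : ι}, i ∉ P → ∀ (a : A i), φ (CoprodI.of a) = 1 := by
    intro i hi a
    rw [hφdef, CoprodI.lift_of, if_neg hi]
    rfl
  have helem : IsElementaryEndo φ := by
    refine ⟨Pᶜ, fun i a => ⟨fun hi => hof_not (by simpa using hi) a,
      fun hi => hof_mem (by simpa using hi) a⟩⟩
  have hNinv : N ≤ N.comap φ := fun x hx => hadm φ helem x hx
  set r : (CoprodI A ⧸ N) →* (CoprodI A ⧸ N) := QuotientGroup.map N N φ hNinv
    with hrdef
  have hrmk : ∀ g : CoprodI A,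
      r (QuotientGroup.mk g) = QuotientGroup.mk (φ g) := fun g => rfl
  have hrange : ∀ g : CoprodI A, φ g ∈ H := by
    intro g
    induction g using CoprodI.induction_on with
    | one => rw [map_one]; exact one_mem H
    | of i a =>
        by_cases hi : i ∈ P
        · rw [hof_mem hi a, hH]
          have hle : (CoprodI.of : A i →* CoprodI A).range
              ≤ ⨆ i ∈ P, (CoprodI.of : A i →* CoprodI A).range :=
            le_iSup₂ (f := fun i (_ : i ∈ P) =>
              (CoprodI.of : A i →* CoprodI A).range) i hi
          exact hle ⟨a, rfl⟩
        · rw [hof_not hi a]; exact one_mem H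
    | mul x y hx hy => rw [map_mul]; exact mul_mem hx hy
  have hfix : ∀ x ∈ H, φ x = x := by
    intro x hx
    have hle : H ≤ MonoidHom.eqLocus φ (MonoidHom.id (CoprodI A)) := by
      rw [hH]
      refine iSup_le fun i => iSup_le fun hi => ?_
      rintro y ⟨a, rfl⟩
      show φ (CoprodI.of a) = MonoidHom.id (CoprodI A) (CoprodI.of a)
      exact hof_mem hi a
    exact hle hx
  have hmemiff : ∀ g : CoprodI A,
      (∃ x ∈ H, g⁻¹ * x ∈ N) ↔ r (QuotientGroup.mk g) = QuotientGroup.mk g := by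
    intro g
    constructor
    · rintro ⟨x, hxH, hgx⟩
      have h1 : (QuotientGroup.mk g : CoprodI A ⧸ N) = QuotientGroup.mk x :=
        QuotientGroup.eq.mpr hgx
      rw [h1, hrmk, hfix x hxH]
    · intro hr
      refine ⟨φ g, hrange g, ?_⟩
      have h1 : (QuotientGroup.mk (φ g) : CoprodI A ⧸ N) = QuotientGroup.mk g := by
        rw [← hrmk]; exact hr
      have h2 := QuotientGroup.eq.mp h1
      have h3 := N.inv_mem h2
      rwa [mul_inv_rev, inv_inv] at h3
  -- existence of a "bad" cell
  obtain ⟨j', hj'⟩ := hβ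
  have hbad : ∃ p : Fin l × Fin k,
      r ((QuotientGroup.mk (δ p.1) : CoprodI A ⧸ N) * QuotientGroup.mk (μ p.2))
        ≠ (QuotientGroup.mk (δ p.1) : CoprodI A ⧸ N) * QuotientGroup.mk (μ p.2) := by
    by_cases h1 : r ((QuotientGroup.mk (δ ⟨0, hl⟩) : CoprodI A ⧸ N)
          * QuotientGroup.mk (μ ⟨0, hk⟩))
        = (QuotientGroup.mk (δ ⟨0, hl⟩) : CoprodI A ⧸ N) * QuotientGroup.mk (μ ⟨0, hk⟩)
    · by_cases h2 : r ((QuotientGroup.mk (δ ⟨0, hl⟩) : CoprodI A ⧸ N)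
            * QuotientGroup.mk (μ j'))
          = (QuotientGroup.mk (δ ⟨0, hl⟩) : CoprodI A ⧸ N) * QuotientGroup.mk (μ j')
      · exfalso
        apply hj'
        apply (hmemiff _).mpr
        have hq : (QuotientGroup.mk ((μ ⟨0, hk⟩)⁻¹ * μ j') : CoprodI A ⧸ N)
            = ((QuotientGroup.mk (δ ⟨0, hl⟩) : CoprodI A ⧸ N)
                * QuotientGroup.mk (μ ⟨0, hk⟩))⁻¹
              * ((QuotientGroup.mk (δ ⟨0, hl⟩) : CoprodI A ⧸ N)
                * QuotientGroup.mk (μ j')) := by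
          rw [QuotientGroup.mk_mul, QuotientGroup.mk_inv]
          group
        rw [hq, map_mul, map_inv, h1, h2]
      · exact ⟨(⟨0, hl⟩, j'), h2⟩
    · exact ⟨(⟨0, hl⟩, ⟨0, hk⟩), h1⟩
  obtain ⟨p₀, hbad₀, huniq⟩ := grid_lemma lo hbi r
    (fun i => (QuotientGroup.mk (δ i) : CoprodI A ⧸ N))
    (fun j => (QuotientGroup.mk (μ j) : CoprodI A ⧸ N)) hδ hμ hbad
  refine ⟨p₀.1, p₀.2, ?_, ?_⟩
  · intro hex
    apply hbad₀
    have h := (hmemiff _).mp hex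
    rwa [QuotientGroup.mk_mul] at h
  · intro i j hne heq
    refine huniq (i, j) (fun h => hne h) ?_
    show (QuotientGroup.mk (δ p₀.1) : CoprodI A ⧸ N) * QuotientGroup.mk (μ p₀.2)
        = (QuotientGroup.mk (δ i) : CoprodI A ⧸ N) * QuotientGroup.mk (μ j)
    rw [← QuotientGroup.mk_mul, ← QuotientGroup.mk_mul]
    exact heq
end
end

section
/- Let F be the free product of nontrivial groups A_1, …, A_n (n ≥ 2), let H be the subgroup of F generated by A_1, …, A_{n−1}, and let φ be the endomorphism of F determined by φ(a) = 1 for a ∈ A_n and φ(a) = a for a ∈ A_i with i < n. If N is a normal subgroup of F with φ(N) ⊆ N, then for every l ≥ 1 one has H ∩ γ_l N = γ_l (H ∩ N), where γ_l denotes the l-th term of the lower central series. -/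
open Monoid
open scoped Pointwise

noncomputable section

/-- The (l+1)-st term (in 1-based numbering) of the lower central series of a subgroup `H`,
viewed as a subgroup of the ambient group; `gammaS H 0 = H`. -/
def gammaS {F : Type*} [Group F] (H : Subgroup F) (l : ℕ) : Subgroup F :=
  Subgroup.map H.subtype ((⊤ : Subgroup ↥H).lowerCentralSeries l)

/-- With `F` the free product of nontrivial groups `A 0, …, A (n-1)` (`n ≥ 2`), `H` the
subgroup generated by `A 0, …, A (n-2)`, `φ` the endomorphism of `F` killing the last
factor and fixing the others, and `N` a normal subgroup with `φ(N) ⊆ N`: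
`H ∩ γ_l N = γ_l (H ∩ N)` for every `l ≥ 1` (here `gammaS · l` is the paper's `γ_{l+1}`). -/
theorem statement14 {n : ℕ} (hn : 2 ≤ n) (A : Fin n → Type) [∀ i, Group (A i)]
    [∀ i, Nontrivial (A i)]
    (H : Subgroup (CoprodI A))
    (hH : H = ⨆ (i : Fin n) (_ : (i : ℕ) < n - 1),
      (CoprodI.of : A i →* CoprodI A).range)
    (φ : CoprodI A →* CoprodI A)
    (hφ : ∀ (i : Fin n) (a : A i),
      ((i : ℕ) = n - 1 → φ (CoprodI.of a) = 1)
        ∧ ((i : ℕ) < n - 1 → φ (CoprodI.of a) = CoprodI.of a))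
    (N : Subgroup (CoprodI A)) [N.Normal] (hφN : ∀ x ∈ N, φ x ∈ N) :
    ∀ l : ℕ, H ⊓ gammaS N l = gammaS (H ⊓ N) l := by
  -- φ fixes H pointwise
  have hfix : ∀ x ∈ H, φ x = x := by
    have hle : H ≤ φ.eqLocus (MonoidHom.id _) := by
      rw [hH]
      refine iSup_le fun i => iSup_le fun hi => ?_
      rintro x ⟨a, rfl⟩
      exact (hφ i a).2 hi
    exact fun x hx => hle hx
  -- range of φ lies in H
  have hrange : ∀ x, φ x ∈ H := by
    intro x
    induction x using Monoid.CoprodI.induction_on with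
    | of i a =>
      rcases lt_or_eq_of_le (Nat.le_sub_one_of_lt i.isLt) with h | h
      · rw [(hφ i a).2 h, hH]
        exact Subgroup.mem_iSup_of_mem i (Subgroup.mem_iSup_of_mem h ⟨a, rfl⟩)
      · rw [(hφ i a).1 h]; exact one_mem _
    | mul x y hx hy => rw [map_mul]; exact mul_mem hx hy
    | one => rw [map_one]; exact one_mem _
  -- the retraction N → H ⊓ N induced by φ
  let ψ : ↥N →* ↥(H ⊓ N) :=
    { toFun := fun x => ⟨φ x, hrange x, hφN x x.2⟩
      map_one' := by ext; simp
      map_mul' := fun x y => by ext; simp }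
  -- the inclusion H ⊓ N → N
  let ι : ↥(H ⊓ N) →* ↥N := Subgroup.inclusion inf_le_right
  intro l
  apply le_antisymm
  · rintro x ⟨hxH, y, hy, rfl⟩
    have hψ : ψ y ∈ (⊤ : Subgroup ↥(H ⊓ N)).lowerCentralSeries l :=
      lowerCentralSeries.map ψ l ⟨y, hy, rfl⟩
    refine ⟨ψ y, hψ, ?_⟩
    simpa [ψ] using hfix _ hxH
  · rintro x ⟨y, hy, rfl⟩
    refine ⟨y.2.1, ι y, lowerCentralSeries.map ι l ⟨y, hy, rfl⟩, rfl⟩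
end
end
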